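/- Let (X,S) be a non-degenerate symmetric solution with |X| = n satisfying Property (C). Then the quotient group W(X,S) of G(X,S), obtained by adding the relations xy = 1 for each frozen pair (x,y) to the defining presentation of G(X,S), is a finite group of order 2^n, and the kernel of the projection G(X,S) → W(X,S) is free Abelian of rank n (generated by the frozen elements). -/

import Mathlib

/-!
Sending `x` to the monomial matrix `(e_x, g_x) ∈ A^X ⋊ Sym(X)` respects the defining relations of
`G(X,S)` (by involutivity and the braid relation), and by Property (C) it sends the frozen element
`θ_x = x ⬝ yf x` to the diagonal matrix `e_x²`. For `A = ℤ` this shows that the `θ_x` are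
independent; for `A = {±1}` it gives a map `W(X,S) → {±1}^X`, which is onto. It is injective
because every element of `W(X,S)` is a positive word, and a positive word in which every left
coordinate occurs an even number of times is trivial: a repeated left coordinate `yf x` can be
moved to the front by the relations, where it cancels against `x`. Finally
`θ_x z = z θ_{α_z x}` for a permutation `α_z` of `X`, so the `θ_x` commute and generate a normal
subgroup, which is therefore the kernel of `G(X,S) → W(X,S)`.
-/

/-- Relators of the structure group presentation `⟨X ∣ xy = g_x(y) f_y(x)⟩`. -/
def structGrpRels {X : Type*} (g f : X → X → X) : Set (FreeGroup X) :=
  {w | ∃ x y : X, w = FreeGroup.of x * FreeGroup.of y *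
      (FreeGroup.of (g x y) * FreeGroup.of (f y x))⁻¹}

/-- `S` acting on the first two components of `X³`. -/
def S12 {X : Type*} (S : X × X → X × X) : X × X × X → X × X × X :=
  fun p => ((S (p.1, p.2.1)).1, (S (p.1, p.2.1)).2, p.2.2)

/-- `S` acting on the last two components of `X³`. -/
def S23 {X : Type*} (S : X × X → X × X) : X × X × X → X × X × X :=
  fun p => (p.1, (S (p.2.1, p.2.2)).1, (S (p.2.1, p.2.2)).2)

/-- The braid relation `S¹²S²³S¹² = S²³S¹²S²³`. -/
def Braided {X : Type*} (S : X × X → X × X) : Prop :=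
  S12 S ∘ S23 S ∘ S12 S = S23 S ∘ S12 S ∘ S23 S
/-- Property (C): for every frozen pair `(x,y)` (i.e. `S(x,y) = (x,y)`), one has
`g_x ∘ g_y = id` and `f_y ∘ f_x = id`. -/
def PropertyC {X : Type*} (S : X × X → X × X) (g f : X → X → X) : Prop :=
  ∀ x y : X, S (x, y) = (x, y) →
    (∀ z : X, g x (g y z) = z) ∧ (∀ z : X, f y (f x z) = z)


/-- Relators of the finite quotient `W(X,S)`: the structure group relators together with the
relators `xy` for every frozen pair `(x,y)`. -/
def quotRels {X : Type*} (S : X × X → X × X) (g f : X → X → X) : Set (FreeGroup X) :=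
  structGrpRels g f ∪
    {w | ∃ x y : X, S (x, y) = (x, y) ∧ w = FreeGroup.of x * FreeGroup.of y}

open Function
open scoped List

theorem exists_list_map_prod_eq {X M : Type*} [Group M] {ι : X → M}
    (hgen : Subgroup.closure (Set.range ι) = ⊤) (hinv : ∀ x, ∃ y, ι y = (ι x)⁻¹) (w : M) :
    ∃ l : List X, (l.map ι).prod = w := by
  have hw : w ∈ (Subgroup.closure (Set.range ι)).toSubmonoid := hgen ▸ Subgroup.mem_top w
  have hsymm : Set.range ι ∪ (Set.range ι)⁻¹ = Set.range ι := by
    refine Set.union_eq_left.2 ?_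
    rintro _ ⟨x, hx⟩
    obtain ⟨y, hy⟩ := hinv x
    exact ⟨y, by rw [hy, hx, inv_inv]⟩
  rw [Subgroup.closure_toSubmonoid, hsymm] at hw
  induction hw using Submonoid.closure_induction with
  | mem _ hx => obtain ⟨x, rfl⟩ := hx; exact ⟨[x], by simp⟩
  | one => exact ⟨[], rfl⟩
  | mul _ _ _ _ ihu ihv =>
    obtain ⟨l, rfl⟩ := ihu
    obtain ⟨l', rfl⟩ := ihv
    exact ⟨l ++ l', by simp⟩

theorem SemidirectProduct.left_inv_mul_eq_one {N G : Type*} [Group N] [Group G]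
    {φ : G →* MulAut N} {a b : N ⋊[φ] G} (h : a.left = b.left) : (a⁻¹ * b).left = 1 := by
  simp [SemidirectProduct.mul_left, SemidirectProduct.inv_left, h]

section Identities

variable {X : Type*} {S : X × X → X × X} {g f : X → X → X}

theorem g_g_f_of_involutive (hS : ∀ x y, S (x, y) = (g x y, f y x))
    (hinv : ∀ p, S (S p) = p) (x y : X) : g (g x y) (f y x) = x := by
  simpa [hS] using congrArg Prod.fst (hinv (x, y))

theorem braided_apply (hS : ∀ x y, S (x, y) = (g x y, f y x)) (hbr : Braided S) (x y z : X) :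
    (g (g x y) (g (f y x) z), f (g (f y x) z) (g x y), f z (f y x))
      = (g x (g y z), g (f (g y z) x) (f z y), f (f z y) (f (g y z) x)) := by
  simpa [S12, S23, hS] using congrFun hbr (x, y, z)

theorem g_g_g_of_braided (hS : ∀ x y, S (x, y) = (g x y, f y x)) (hbr : Braided S)
    (x y z : X) : g (g x y) (g (f y x) z) = g x (g y z) :=
  congrArg Prod.fst (braided_apply hS hbr x y z)

theorem f_g_of_braided (hS : ∀ x y, S (x, y) = (g x y, f y x)) (hbr : Braided S)
    (x y z : X) : f (g (f y x) z) (g x y) = g (f (g y z) x) (f z y) :=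
  congrArg (·.2.1) (braided_apply hS hbr x y z)

end Identities

section Frozen

variable {X : Type*} {S : X × X → X × X} {g f : X → X → X} {yf : X → X}
  (hS : ∀ x y, S (x, y) = (g x y, f y x)) (hyf : ∀ x, S (x, yf x) = (x, yf x))

include hS hyf

theorem g_yf (x : X) : g x (yf x) = x := by
  simpa [hS] using congrArg Prod.fst (hyf x)

theorem f_yf (x : X) : f (yf x) x = yf x := by
  simpa [hS] using congrArg Prod.snd (hyf x)

theorem eq_yf_of_g_eq (hg : ∀ x, Bijective (g x)) {x y : X} (h : g x y = x) : y = yf x :=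
  (hg x).1 (h.trans (g_yf hS hyf x).symm)

theorem eq_yf_of_frozen (hg : ∀ x, Bijective (g x)) {x y : X} (h : S (x, y) = (x, y)) :
    y = yf x :=
  eq_yf_of_g_eq hS hyf hg (by simpa [hS] using congrArg Prod.fst h)

theorem yf_g (hg : ∀ x, Bijective (g x)) (hbr : Braided S) (z x : X) :
    yf (g z x) = g (f x z) (yf x) := by
  refine (eq_yf_of_g_eq hS hyf hg ?_).symm
  simpa [g_yf hS hyf x] using g_g_g_of_braided hS hbr z x (yf x)

theorem yf_f_g (hg : ∀ x, Bijective (g x)) (hbr : Braided S) (z x : X) :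
    yf (f (g (yf x) z) x) = f z (yf x) := by
  refine (eq_yf_of_g_eq hS hyf hg ?_).symm
  simpa [f_yf hS hyf x, g_yf hS hyf x] using (f_g_of_braided hS hbr x (yf x) z).symm

end Frozen

section PropertyCFrozen

variable {X : Type*} {S : X × X → X × X} {g f : X → X → X} {yf : X → X}
  (hC : PropertyC S g f) (hyf : ∀ x, S (x, yf x) = (x, yf x))

include hC hyf

theorem g_g_yf (x z : X) : g x (g (yf x) z) = z := (hC x (yf x) (hyf x)).1 z

theorem f_yf_f (x z : X) : f (yf x) (f x z) = z := (hC x (yf x) (hyf x)).2 z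

end PropertyCFrozen

section FrozenShift

variable {X : Type*} {S : X × X → X × X} {g f : X → X → X} {yf : X → X}
  (hS : ∀ x y, S (x, y) = (g x y, f y x)) (hyf : ∀ x, S (x, yf x) = (x, yf x))
  (hg : ∀ x, Bijective (g x)) (hbr : Braided S) (hC : PropertyC S g f)

/-- Moving the frozen element `x ⬝ yf x` to the right past the generator `z` turns it into the
frozen element of `frozenShift g f yf z x`. -/
def frozenShift (g f : X → X → X) (yf : X → X) (z x : X) : X := f (g (yf x) z) x

include hS hyf hg hbr hC in
theorem frozenShift_yf_frozenShift (z x : X) :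
    frozenShift g f yf (yf z) (frozenShift g f yf z x) = x := by
  unfold frozenShift
  rw [yf_f_g hS hyf hg hbr z x, ← yf_g hS hyf hg hbr (yf x) z]
  exact f_yf_f hC hyf (g (yf x) z) x

include hS hyf hg hbr hC in
theorem frozenShift_bijective [Finite X] (z : X) : Bijective (frozenShift g f yf z) :=
  Finite.injective_iff_bijective.1
    (LeftInverse.injective (frozenShift_yf_frozenShift hS hyf hg hbr hC z))

variable {M : Type*} [Monoid M] {ι : X → M} (hι : ∀ x y, ι x * ι y = ι (g x y) * ι (f y x))

include hS hyf hg hbr hC hι in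
theorem frozen_mul_of (z x : X) :
    ι x * ι (yf x) * ι z
      = ι z * (ι (frozenShift g f yf z x) * ι (yf (frozenShift g f yf z x))) := by
  rw [mul_assoc, hι (yf x) z, ← mul_assoc, hι x, g_g_yf hC hyf, mul_assoc, frozenShift,
    yf_f_g hS hyf hg hbr z x]

include hS hyf hg hbr hC hι in
theorem commute_frozen (a b : X) : Commute (ι a * ι (yf a)) (ι b * ι (yf b)) := by
  have push := frozen_mul_of hS hyf hg hbr hC hι
  calc ι a * ι (yf a) * (ι b * ι (yf b))
      = ι b * (ι (frozenShift g f yf b a) * ι (yf (frozenShift g f yf b a)) * ι (yf b)) := by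
        rw [← mul_assoc, push, mul_assoc]
    _ = ι b * ι (yf b) * (ι a * ι (yf a)) := by
        rw [push, frozenShift_yf_frozenShift hS hyf hg hbr hC, ← mul_assoc]

end FrozenShift

section LeftCoords

variable {X : Type*} {S : X × X → X × X} {g f : X → X → X} {yf : X → X}
  (hS : ∀ x y, S (x, y) = (g x y, f y x)) (hinv : ∀ p, S (S p) = p) (hbr : Braided S)

/-- The left coordinates `x₁, g_{x₁}(x₂), g_{x₁}(g_{x₂}(x₃)), …` of the positive word
`x₁ x₂ x₃ ⋯`. -/
def leftCoords (g : X → X → X) : List X → List X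
  | [] => []
  | a :: t => a :: (leftCoords g t).map (g a)

include hS hinv hbr in
theorem leftCoords_perm_of_rel (x y : X) (t : List X) :
    leftCoords g (g x y :: f y x :: t) ~ leftCoords g (x :: y :: t) := by
  have hcomp : g (g x y) ∘ g (f y x) = g x ∘ g y := funext (g_g_g_of_braided hS hbr x y)
  simp only [leftCoords, List.map_cons, List.map_map, g_g_f_of_involutive hS hinv, hcomp]
  exact .swap _ _ _

variable {M : Type*} [Monoid M] {ι : X → M} (hι : ∀ x y, ι x * ι y = ι (g x y) * ι (f y x))

include hS hinv hbr hι in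
theorem exists_prod_eq_mul_of_mem_leftCoords {l : List X} {b : X} (hb : b ∈ leftCoords g l) :
    ∃ l' : List X, (l.map ι).prod = ι b * (l'.map ι).prod ∧ l'.length < l.length ∧
      leftCoords g (b :: l') ~ leftCoords g l := by
  induction l generalizing b with
  | nil => simp [leftCoords] at hb
  | cons c t ih =>
    rcases List.mem_cons.1 hb with rfl | hb
    · exact ⟨t, rfl, by simp, .rfl⟩
    obtain ⟨b', hb', rfl⟩ := List.mem_map.1 hb
    obtain ⟨t', hprod, hlen, hperm⟩ := ih hb'
    refine ⟨f b' c :: t', ?_, by simpa using hlen, ?_⟩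
    · simp only [List.map_cons, List.prod_cons, hprod, ← mul_assoc, hι c b']
    · exact (leftCoords_perm_of_rel hS hinv hbr c b' t').trans ((hperm.map _).cons c)

include hS hinv hbr hι in
theorem prod_eq_one_of_even_count_leftCoords [DecidableEq X] (hyf : ∀ x, S (x, yf x) = (x, yf x))
    (hg : ∀ x, Bijective (g x)) (hC : PropertyC S g f) (hfrozen : ∀ x, ι x * ι (yf x) = 1) :
    ∀ l : List X, (∀ v, Even ((leftCoords g l).count v)) → (l.map ι).prod = 1
  | [], _ => rfl
  | a :: t, heven => by
    have hmem : yf a ∈ leftCoords g t := by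
      have hodd := heven a
      simp only [leftCoords, List.count_cons_self, Nat.even_add_one] at hodd
      obtain ⟨u, hu, hga⟩ := List.mem_map.1
        (List.count_pos_iff.1 (Nat.pos_of_ne_zero fun h0 => hodd (h0 ▸ by decide)))
      exact eq_yf_of_g_eq hS hyf hg hga ▸ hu
    obtain ⟨t', hprod, hlen, hperm⟩ :=
      exists_prod_eq_mul_of_mem_leftCoords hS hinv hbr hι hmem
    have hcancel : leftCoords g (a :: t) ~ a :: a :: leftCoords g t' := by
      have hid : g a ∘ g (yf a) = id := funext (g_g_yf hC hyf a)
      refine .cons a ((hperm.symm.map (g a)).trans ?_)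
      simp only [leftCoords, List.map_cons, List.map_map, hid, List.map_id, g_yf hS hyf]
      exact .refl _
    rw [List.map_cons, List.prod_cons, hprod, ← mul_assoc, hfrozen, one_mul]
    refine prod_eq_one_of_even_count_leftCoords hyf hg hC hfrozen t' fun v => ?_
    have hv := hcancel.count_eq v ▸ heven v
    by_cases hva : v = a
    · subst hva
      simpa [List.count_cons_self, Nat.even_add_one] using hv
    · simpa [List.count_cons, Ne.symm hva] using hv
  termination_by l => l.length

end LeftCoords

section Monomial

variable {X : Type*} {S : X × X → X × X} {g f : X → X → X} {yf : X → X} {A : Type*} [CommGroup A]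

theorem mulAutArrow_apply_perm (σ : Equiv.Perm X) (F : X → A) (v : X) :
    mulAutArrow σ F v = F (σ⁻¹ v) := rfl

variable [DecidableEq X]

theorem mulAutArrow_mulSingle (σ : Equiv.Perm X) (y : X) (t : A) :
    mulAutArrow σ (Pi.mulSingle y t) = Pi.mulSingle (σ y) t := by
  ext v
  simp only [mulAutArrow_apply_perm, Pi.mulSingle_apply, Equiv.Perm.eq_inv_iff_eq, eq_comm]

variable (A) in
/-- Monomial matrices over `A` indexed by `X`. -/
abbrev Monomial (X : Type*) := (X → A) ⋊[mulAutArrow] Equiv.Perm X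

noncomputable def monomialOf (hg : ∀ x, Bijective (g x)) (t : A) (x : X) : Monomial A X :=
  ⟨Pi.mulSingle x t, Equiv.ofBijective (g x) (hg x)⟩

variable (hg : ∀ x, Bijective (g x)) (t : A)

theorem monomialOf_mul_monomialOf (x y : X) :
    monomialOf hg t x * monomialOf hg t y
      = ⟨Pi.mulSingle x t * Pi.mulSingle (g x y) t,
          Equiv.ofBijective (g x) (hg x) * Equiv.ofBijective (g y) (hg y)⟩ := by
  rw [monomialOf, monomialOf, SemidirectProduct.mul_def, mulAutArrow_mulSingle]
  rfl

theorem monomialOf_rel (hS : ∀ x y, S (x, y) = (g x y, f y x)) (hinv : ∀ p, S (S p) = p)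
    (hbr : Braided S) (x y : X) :
    monomialOf hg t x * monomialOf hg t y
      = monomialOf hg t (g x y) * monomialOf hg t (f y x) := by
  rw [monomialOf_mul_monomialOf, monomialOf_mul_monomialOf, g_g_f_of_involutive hS hinv]
  congr 1
  · exact mul_comm _ _
  · ext v
    exact (g_g_g_of_braided hS hbr x y v).symm

theorem monomialOf_mul_monomialOf_yf (hS : ∀ x y, S (x, y) = (g x y, f y x))
    (hyf : ∀ x, S (x, yf x) = (x, yf x)) (hC : PropertyC S g f) (x : X) :
    monomialOf hg t x * monomialOf hg t (yf x)
      = SemidirectProduct.inl (Pi.mulSingle x (t * t) : X → A) := by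
  rw [monomialOf_mul_monomialOf, g_yf hS hyf, ← Pi.mulSingle_mul]
  congr 1
  ext v
  exact g_g_yf hC hyf x v

theorem left_prod_map_monomialOf (l : List X) :
    (l.map (monomialOf hg t)).prod.left = fun v => t ^ (leftCoords g l).count v := by
  induction l with
  | nil => ext; simp [leftCoords]
  | cons a l ih =>
    ext v
    obtain ⟨u, rfl⟩ := (hg a).2 v
    simp only [List.map_cons, List.prod_cons, SemidirectProduct.mul_left, ih, Pi.mul_apply,
      mulAutArrow_apply_perm, leftCoords, List.count_cons, pow_add]
    have hright : (monomialOf hg t a).right⁻¹ (g a u) = u :=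
      (Equiv.ofBijective (g a) (hg a)).symm_apply_apply u
    rw [hright, List.count_map_of_injective _ _ (hg a).1, mul_comm]
    by_cases h : g a u = a
    · simp [monomialOf, h]
    · simp [monomialOf, h, Ne.symm h]

end Monomial

section Presentations

variable {X : Type*} {S : X × X → X × X} {g f : X → X → X}

theorem lift_eq_one_of_mem_structGrpRels {H : Type*} [Group H] {ι : X → H}
    (hι : ∀ x y, ι x * ι y = ι (g x y) * ι (f y x)) :
    ∀ r ∈ structGrpRels g f, FreeGroup.lift ι r = 1 := by
  rintro _ ⟨x, y, rfl⟩
  simp only [map_mul, map_inv, FreeGroup.lift_apply_of, hι x y, mul_inv_cancel]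

theorem lift_eq_one_of_mem_quotRels {H : Type*} [Group H] {ι : X → H}
    (hι : ∀ x y, ι x * ι y = ι (g x y) * ι (f y x))
    (hfrozen : ∀ x y, S (x, y) = (x, y) → ι x * ι y = 1) :
    ∀ r ∈ quotRels S g f, FreeGroup.lift ι r = 1 := by
  rintro _ (hr | ⟨x, y, hxy, rfl⟩)
  · exact lift_eq_one_of_mem_structGrpRels hι _ hr
  · simpa using hfrozen x y hxy

theorem structGrp_of_mul_of (x y : X) :
    (PresentedGroup.of x : PresentedGroup (structGrpRels g f)) * .of y
      = .of (g x y) * .of (f y x) :=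
  PresentedGroup.mk_eq_mk_of_mul_inv_mem ⟨x, y, rfl⟩

theorem quot_of_mul_of (x y : X) :
    (PresentedGroup.of x : PresentedGroup (quotRels S g f)) * .of y
      = .of (g x y) * .of (f y x) :=
  PresentedGroup.mk_eq_mk_of_mul_inv_mem (.inl ⟨x, y, rfl⟩)

theorem quot_of_mul_of_eq_one {x y : X} (h : S (x, y) = (x, y)) :
    (PresentedGroup.of x : PresentedGroup (quotRels S g f)) * .of y = 1 :=
  PresentedGroup.one_of_mem (.inr ⟨x, y, h, rfl⟩)

end Presentations

section Cardinality

variable {X : Type*} [DecidableEq X] {g : X → X → X} (hg : ∀ x, Bijective (g x))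
  {M : Type*} [Group M] {ι : X → M} (ρ : M →* Monomial ℤˣ X)
  (hρ : ∀ x, ρ (ι x) = monomialOf hg (-1) x)

include hρ in
theorem surjective_left_of_monomialOf [Finite X] : Surjective fun w => (ρ w).left := by
  have hstep (w : M) (z : X) : ∃ w', (ρ w').left = (ρ w).left * Pi.mulSingle z (-1) := by
    refine ⟨w * ι ((ρ w).right⁻¹ z), ?_⟩
    rw [map_mul, hρ, SemidirectProduct.mul_left, monomialOf, mulAutArrow_mulSingle,
      ← Equiv.Perm.mul_apply, mul_inv_cancel, Equiv.Perm.one_apply]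
  have hmul (F : X → ℤˣ) (w : M) : ∃ w', (ρ w').left = (ρ w).left * F := by
    induction F using Pi.mulSingle_induction generalizing w with
    | one => exact ⟨w, (mul_one _).symm⟩
    | mul F F' hF hF' =>
      obtain ⟨w₁, h₁⟩ := hF w
      obtain ⟨w₂, h₂⟩ := hF' w₁
      exact ⟨w₂, by rw [h₂, h₁, mul_assoc]⟩
    | mulSingle z u =>
      rcases Int.units_eq_one_or u with rfl | rfl
      · exact ⟨w, by simp⟩
      · exact hstep w z
  intro F
  obtain ⟨w, hw⟩ := hmul F 1
  exact ⟨w, by simpa using hw⟩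

include hρ in
theorem injective_left_of_monomialOf {S : X × X → X × X} {f : X → X → X} {yf : X → X}
    (hS : ∀ x y, S (x, y) = (g x y, f y x)) (hinv : ∀ p, S (S p) = p) (hbr : Braided S)
    (hyf : ∀ x, S (x, yf x) = (x, yf x)) (hC : PropertyC S g f)
    (hgen : Subgroup.closure (Set.range ι) = ⊤) (hι : ∀ x y, ι x * ι y = ι (g x y) * ι (f y x))
    (hfrozen : ∀ x, ι x * ι (yf x) = 1) :
    Injective fun w => (ρ w).left := by
  intro w w' h
  obtain ⟨l, hl⟩ := exists_list_map_prod_eq hgen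
    (fun x => ⟨yf x, eq_inv_of_mul_eq_one_right (hfrozen x)⟩) (w⁻¹ * w')
  have hleft := SemidirectProduct.left_inv_mul_eq_one h
  rw [← map_inv, ← map_mul, ← hl, map_list_prod, List.map_map, Function.comp_def] at hleft
  simp only [hρ] at hleft
  rw [left_prod_map_monomialOf] at hleft
  have heven (v : X) : Even ((leftCoords g l).count v) :=
    (neg_one_pow_eq_one_iff_even (by decide)).1 (congrFun hleft v)
  rw [← inv_mul_eq_one, ← hl]
  exact prod_eq_one_of_even_count_leftCoords hS hinv hbr hι hyf hg hC hfrozen l heven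

end Cardinality

section Kernel

variable {X : Type*} {S : X × X → X × X} {g f : X → X → X} {yf : X → X}
  (hS : ∀ x y, S (x, y) = (g x y, f y x)) (hyf : ∀ x, S (x, yf x) = (x, yf x))
  (hg : ∀ x, Bijective (g x)) (hbr : Braided S) (hC : PropertyC S g f)

include hS hyf hg hbr hC in
theorem normal_closure_range_frozen [Finite X] {M : Type*} [Group M] {ι : X → M}
    (hgen : Subgroup.closure (Set.range ι) = ⊤) (hι : ∀ x y, ι x * ι y = ι (g x y) * ι (f y x)) :
    (Subgroup.closure (Set.range fun x => ι x * ι (yf x))).Normal := by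
  rw [← Subgroup.normalizer_eq_top_iff, eq_top_iff, ← hgen, Subgroup.closure_le]
  refine (Set.range_subset_iff.2 fun z => ?_).trans (Subgroup.normalizer_le_normalizer_closure _)
  rw [SetLike.mem_coe, Subgroup.mem_normalizer_iff_conj_image_eq, ← Set.range_comp,
    ← (frozenShift_bijective hS hyf hg hbr hC z).2.range_comp]
  congr 1
  funext x
  rw [comp_apply, comp_apply, MulAut.conj_apply, ← frozen_mul_of hS hyf hg hbr hC hι,
    mul_inv_cancel_right]

include hS hyf hg hbr hC in
theorem ker_eq_closure_range_frozen [Finite X]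
    (π : PresentedGroup (structGrpRels g f) →* PresentedGroup (quotRels S g f))
    (hπ : ∀ x, π (.of x) = .of x) :
    π.ker = Subgroup.closure (Set.range fun x => .of x * .of (yf x)) := by
  set H := Subgroup.closure (Set.range fun x : X =>
    (.of x * .of (yf x) : PresentedGroup (structGrpRels g f)))
  have : H.Normal := normal_closure_range_frozen hS hyf hg hbr hC
    (PresentedGroup.closure_range_of _) structGrp_of_mul_of
  refine le_antisymm (fun u hu => ?_) ((Subgroup.closure_le _).2 ?_)
  · let ψ : PresentedGroup (quotRels S g f) →* PresentedGroup (structGrpRels g f) ⧸ H :=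
      PresentedGroup.toGroup (f := fun x => ((.of x : PresentedGroup (structGrpRels g f)) : _ ⧸ H))
        (lift_eq_one_of_mem_quotRels
          (fun x y => by rw [← QuotientGroup.mk_mul, structGrp_of_mul_of, QuotientGroup.mk_mul])
          (fun x y hxy => by
            obtain rfl := eq_yf_of_frozen hS hyf hg hxy
            rw [← QuotientGroup.mk_mul, QuotientGroup.eq_one_iff]
            exact Subgroup.subset_closure ⟨x, rfl⟩))
    have hψ : ψ.comp π = QuotientGroup.mk' H :=
      PresentedGroup.ext fun x => by simp [ψ, hπ, PresentedGroup.toGroup.of]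
    rw [← QuotientGroup.eq_one_iff, ← QuotientGroup.mk'_apply, ← hψ, MonoidHom.comp_apply,
      MonoidHom.mem_ker.1 hu, map_one]
  · rintro _ ⟨x, rfl⟩
    rw [SetLike.mem_coe, MonoidHom.mem_ker, map_mul, hπ, hπ]
    exact quot_of_mul_of_eq_one (hyf x)

end Kernel

section SignedProd

variable {X M : Type*} [Group M]

/-- `FreeGroup.lift θ (FreeGroup.mk l)`, written out as a list product. -/
def signedProd (θ : X → M) (l : List (X × Bool)) : M :=
  (l.map fun p => if p.2 then θ p.1 else (θ p.1)⁻¹).prod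

theorem map_signedProd {N : Type*} [Group N] (φ : M →* N) (θ : X → M) (l : List (X × Bool)) :
    φ (signedProd θ l) = signedProd (φ ∘ θ) l := by
  simp [signedProd, map_list_prod, Function.comp_def, apply_ite φ]

theorem signedProd_mulSingle_apply [DecidableEq X] {A : Type*} [CommGroup A] (s : A)
    (l : List (X × Bool)) (x : X) :
    signedProd (fun y => Pi.mulSingle y s) l x
      = s ^ ((l.count (x, true) : ℤ) - l.count (x, false)) := by
  induction l with
  | nil => simp [signedProd]
  | cons p l ih =>
    obtain ⟨y, b⟩ := p
    simp only [signedProd, List.map_cons, List.prod_cons] at ih ⊢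
    rw [Pi.mul_apply, ih]
    rcases eq_or_ne y x with rfl | hy
    · cases b <;> simp [sub_add_eq_sub_sub, add_sub_right_comm, zpow_sub_one,
        zpow_add_one, mul_comm]
    · cases b <;> simp [hy]

end SignedProd

section StructureGroup

variable {X : Type*} [DecidableEq X] {S : X × X → X × X} {g f : X → X → X} {yf : X → X}

theorem count_sub_count_eq_of_signedProd_eq (hS : ∀ x y, S (x, y) = (g x y, f y x))
    (hinv : ∀ p, S (S p) = p) (hbr : Braided S) (hyf : ∀ x, S (x, yf x) = (x, yf x))
    (hg : ∀ x, Bijective (g x)) (hC : PropertyC S g f) {l l' : List (X × Bool)}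
    (h : signedProd (fun x => (.of x * .of (yf x) : PresentedGroup (structGrpRels g f))) l
      = signedProd (fun x => .of x * .of (yf x)) l') (x : X) :
    (l.count (x, true) : ℤ) - l.count (x, false) = l'.count (x, true) - l'.count (x, false) := by
  let t : Multiplicative ℤ := .ofAdd 1
  let ρ : PresentedGroup (structGrpRels g f) →* Monomial (Multiplicative ℤ) X :=
    PresentedGroup.toGroup (lift_eq_one_of_mem_structGrpRels (monomialOf_rel hg t hS hinv hbr))
  have hθ : ρ ∘ (fun x => .of x * .of (yf x))
      = SemidirectProduct.inl ∘ fun y => Pi.mulSingle y (t * t) := by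
    funext y
    simp [ρ, PresentedGroup.toGroup.of, monomialOf_mul_monomialOf_yf hg t hS hyf hC]
  have h' := congrArg ρ h
  rw [map_signedProd, map_signedProd, hθ, ← map_signedProd, ← map_signedProd,
    SemidirectProduct.inl_inj] at h'
  have := congrArg Multiplicative.toAdd (congrFun h' x)
  rw [signedProd_mulSingle_apply, signedProd_mulSingle_apply] at this
  simpa [t] using this

end StructureGroup

theorem card_presentedGroup_quotRels {X : Type*} [Fintype X] [DecidableEq X]
    {S : X × X → X × X} {g f : X → X → X} {yf : X → X}
    (hS : ∀ x y, S (x, y) = (g x y, f y x)) (hinv : ∀ p, S (S p) = p) (hbr : Braided S)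
    (hyf : ∀ x, S (x, yf x) = (x, yf x)) (hg : ∀ x, Bijective (g x)) (hC : PropertyC S g f) :
    Nat.card (PresentedGroup (quotRels S g f)) = 2 ^ Fintype.card X := by
  let ρ : PresentedGroup (quotRels S g f) →* Monomial ℤˣ X :=
    PresentedGroup.toGroup (lift_eq_one_of_mem_quotRels (monomialOf_rel hg (-1) hS hinv hbr)
      fun x y hxy => by
        obtain rfl := eq_yf_of_frozen hS hyf hg hxy
        rw [monomialOf_mul_monomialOf_yf hg _ hS hyf hC, neg_mul_neg, mul_one, Pi.mulSingle_one,
          map_one])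
  have hρ (x : X) : ρ (.of x) = monomialOf hg (-1) x := PresentedGroup.toGroup.of _
  have hbij : Bijective fun w => (ρ w).left :=
    ⟨injective_left_of_monomialOf hg ρ hρ hS hinv hbr hyf hC (PresentedGroup.closure_range_of _)
      quot_of_mul_of fun x => quot_of_mul_of_eq_one (hyf x),
      surjective_left_of_monomialOf hg ρ hρ⟩
  rw [Nat.card_eq_of_bijective _ hbij, Nat.card_fun, Nat.card_eq_fintype_card,
    Fintype.card_units_int, Nat.card_eq_fintype_card]

theorem stmt_19_general {X : Type*} [Fintype X] [DecidableEq X]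
    (S : X × X → X × X) (g f : X → X → X)
    (hS : ∀ x y : X, S (x, y) = (g x y, f y x))
    (hg : ∀ x : X, Function.Bijective (g x))
    (hinv : ∀ p : X × X, S (S p) = p)
    (hbr : Braided S)
    (hC : PropertyC S g f)
    (yf : X → X) (hyf : ∀ x : X, S (x, yf x) = (x, yf x)) :
    letI θ : X → PresentedGroup (structGrpRels g f) := fun x =>
      PresentedGroup.of x * PresentedGroup.of (yf x)
    Nat.card (PresentedGroup (quotRels S g f)) = 2 ^ Fintype.card X ∧
      (∃ π : PresentedGroup (structGrpRels g f) →* PresentedGroup (quotRels S g f),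
        ∀ x : X, π (PresentedGroup.of x) = PresentedGroup.of x) ∧
      ∀ π : PresentedGroup (structGrpRels g f) →* PresentedGroup (quotRels S g f),
        (∀ x : X, π (PresentedGroup.of x) = PresentedGroup.of x) →
          π.ker = Subgroup.closure (Set.range θ) ∧
          (∀ x x' : X, Commute (θ x) (θ x')) ∧
          ∀ l l' : List (X × Bool),
            (l.map fun p => if p.2 then θ p.1 else (θ p.1)⁻¹).prod
                = (l'.map fun p => if p.2 then θ p.1 else (θ p.1)⁻¹).prod →
              ∀ x : X,
                (l.count (x, true) : ℤ) - (l.count (x, false) : ℤ)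
                  = (l'.count (x, true) : ℤ) - (l'.count (x, false) : ℤ) := by
  refine ⟨card_presentedGroup_quotRels hS hinv hbr hyf hg hC,
    ⟨PresentedGroup.toGroup (lift_eq_one_of_mem_structGrpRels quot_of_mul_of),
      fun x => PresentedGroup.toGroup.of _⟩,
    fun π hπ => ⟨ker_eq_closure_range_frozen hS hyf hg hbr hC π hπ,
      commute_frozen hS hyf hg hbr hC structGrp_of_mul_of,
      fun l l' h => count_sub_count_eq_of_signedProd_eq hS hinv hbr hyf hg hC h⟩⟩

/-- under Property (C), with `n = |X|`, the quotient `W(X,S)` of `G(X,S)` by the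
relations `xy = 1` for frozen pairs is a finite group of order `2^n`, and the kernel of the
canonical projection `G(X,S) → W(X,S)` is the subgroup generated by the frozen elements, a
free Abelian group of rank `n` freely generated by them. -/
theorem stmt_19 {X : Type*} [Fintype X] [DecidableEq X]
    (S : X × X → X × X) (g f : X → X → X)
    (hS : ∀ x y : X, S (x, y) = (g x y, f y x))
    (hg : ∀ x : X, Function.Bijective (g x))
    (hf : ∀ x : X, Function.Bijective (f x))
    (hinv : ∀ p : X × X, S (S p) = p)
    (hbr : Braided S)
    (hC : PropertyC S g f)
    (yf : X → X) (hyf : ∀ x : X, S (x, yf x) = (x, yf x)) :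
    letI θ : X → PresentedGroup (structGrpRels g f) := fun x =>
      PresentedGroup.of x * PresentedGroup.of (yf x)
    Nat.card (PresentedGroup (quotRels S g f)) = 2 ^ Fintype.card X ∧
      (∃ π : PresentedGroup (structGrpRels g f) →* PresentedGroup (quotRels S g f),
        ∀ x : X, π (PresentedGroup.of x) = PresentedGroup.of x) ∧
      ∀ π : PresentedGroup (structGrpRels g f) →* PresentedGroup (quotRels S g f),
        (∀ x : X, π (PresentedGroup.of x) = PresentedGroup.of x) →
          π.ker = Subgroup.closure (Set.range θ) ∧
          (∀ x x' : X, Commute (θ x) (θ x')) ∧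
          ∀ l l' : List (X × Bool),
            (l.map fun p => if p.2 then θ p.1 else (θ p.1)⁻¹).prod
                = (l'.map fun p => if p.2 then θ p.1 else (θ p.1)⁻¹).prod →
              ∀ x : X,
                (l.count (x, true) : ℤ) - (l.count (x, false) : ℤ)
                  = (l'.count (x, true) : ℤ) - (l'.count (x, false) : ℤ) :=
  stmt_19_general S g f hS hg hinv hbr hC yf hyf
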